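/- Let a_1,…,a_m ∈ ℝ^{d_x} be unit vectors, fix 1 ≤ i ≤ m, and let a_i' ∈ ℝ^{d_x} be a unit vector with ‖a_i − a_i'‖_2 = d. Let A be the d_x × m matrix with columns a_1,…,a_m and A' the matrix obtained from A by replacing the i-th column with a_i'. Assume that every two distinct columns of A are at distance at least ρ/2 and every two distinct columns of A' are at distance at least ρ/2, where ρ > 0. Then there exist W^1, W^2 ∈ ℝ^{d_x×d_x} and b ∈ ℝ^{d_x} such that W^2·ReLU(W^1 A + b·𝟙^T) + A = A' (ReLU applied entrywise, b·𝟙^T the matrix whose every column is b) and ‖W^1‖_F = ‖W^2‖_F = √(8d)/ρ. -/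

import Mathlib

noncomputable section

open scoped BigOperators

/-- The ReLU function `t ↦ max(t, 0)`. -/
def relu (t : ℝ) : ℝ := max t 0

/-- Euclidean (ℓ²) norm of a vector in `ℝ^d`. -/
def euclNorm {d : ℕ} (v : Fin d → ℝ) : ℝ := Real.sqrt (∑ i, v i ^ 2)

/-- Frobenius norm of a matrix in `ℝ^{d×d}`. -/
def frob {d : ℕ} (M : Fin d → Fin d → ℝ) : ℝ := Real.sqrt (∑ i, ∑ j, M i j ^ 2)

/-- One residual unit `x ↦ W² · ReLU(W¹ x + b) + x` (ReLU applied entrywise). -/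
def resUnitReLU {d : ℕ} (W1 W2 : Fin d → Fin d → ℝ) (b : Fin d → ℝ)
    (x : Fin d → ℝ) : Fin d → ℝ :=
  fun i => (∑ j, W2 i j * relu ((∑ k, W1 j k * x k) + b j)) + x i

/-- The residual network `N = f_R ∘ ⋯ ∘ f_1` where `f_r(x) = W^{r,2}·ReLU(W^{r,1}x + b_r) + x`. -/
def reluNet {d : ℕ} (W1 W2 : ℕ → Fin d → Fin d → ℝ) (b : ℕ → Fin d → ℝ) :
    ℕ → (Fin d → ℝ) → (Fin d → ℝ)
  | 0, x => x
  | r + 1, x => resUnitReLU (W1 r) (W2 r) (b r) (reluNet W1 W2 b r x)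

/-!
For unit vectors `⟪x, y⟫ = 1 - ‖x - y‖² / 2`, so `a i` is the only column whose inner
product with `a i` exceeds `θ = 1 - ρ² / 8`. A single hidden neuron with input weights
`α • a i` and bias `-α θ` therefore fires on `a i` alone, with value `α ρ² / 8`, and the
rank-one output weights `(8 / (α ρ²)) • (a' - a i)` turn this value into the displacement
`a' - a i`. The Frobenius norms are `α` and `8 d / (α ρ²)`, which agree for `α = √(8d) / ρ`.
-/

open Matrix

section EuclNorm

variable {n : ℕ}

lemma euclNorm_sq (v : Fin n → ℝ) : euclNorm v ^ 2 = v ⬝ᵥ v := by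
  rw [euclNorm, Real.sq_sqrt (by positivity)]
  simp only [dotProduct, sq]

lemma euclNorm_nonneg (v : Fin n → ℝ) : 0 ≤ euclNorm v := Real.sqrt_nonneg _

lemma euclNorm_eq_zero {v : Fin n → ℝ} : euclNorm v = 0 ↔ v = 0 := by
  rw [← sq_eq_zero_iff, euclNorm_sq, dotProduct_self_eq_zero]

lemma nonempty_of_euclNorm_ne_zero {v : Fin n → ℝ} (hv : euclNorm v ≠ 0) :
    Nonempty (Fin n) := by
  by_contra h
  exact hv (euclNorm_eq_zero.2 (funext fun k => (h ⟨k⟩).elim))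

lemma euclNorm_smul (c : ℝ) (v : Fin n → ℝ) : euclNorm (c • v) = |c| * euclNorm v := by
  rw [euclNorm, euclNorm, ← Real.sqrt_sq_eq_abs, ← Real.sqrt_mul (sq_nonneg c), Finset.mul_sum]
  simp only [Pi.smul_apply, smul_eq_mul, mul_pow]

lemma euclNorm_sub_comm (x y : Fin n → ℝ) : euclNorm (x - y) = euclNorm (y - x) := by
  rw [← neg_sub, ← neg_one_smul ℝ, euclNorm_smul, abs_neg, abs_one, one_mul]

lemma euclNorm_single (j : Fin n) : euclNorm (Pi.single j (1 : ℝ)) = 1 := by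
  simp [euclNorm, Pi.single_apply]

lemma frob_vecMulVec (c r : Fin n → ℝ) : frob (vecMulVec c r) = euclNorm c * euclNorm r := by
  unfold frob euclNorm
  rw [← Real.sqrt_mul (by positivity), Finset.sum_mul_sum]
  simp only [vecMulVec_apply, mul_pow]

lemma dotProduct_le_of_le_euclNorm_sub {x y : Fin n → ℝ} {δ : ℝ}
    (hx : euclNorm x = 1) (hy : euclNorm y = 1) (hδ : 0 ≤ δ) (h : δ ≤ euclNorm (x - y)) :
    x ⬝ᵥ y ≤ 1 - δ ^ 2 / 2 := by
  have hsq : euclNorm (x - y) ^ 2 = euclNorm x ^ 2 - 2 * (x ⬝ᵥ y) + euclNorm y ^ 2 := by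
    simp only [euclNorm_sq, sub_dotProduct, dotProduct_sub, dotProduct_comm y x]
    ring
  nlinarith [pow_le_pow_left₀ hδ h 2]

end EuclNorm

lemma resUnitReLU_vecMulVec_single {n : ℕ} (j : Fin n) (w v x : Fin n → ℝ) (t : ℝ) :
    resUnitReLU (vecMulVec (Pi.single j 1) w) (vecMulVec v (Pi.single j 1)) (Pi.single j t) x
      = relu (w ⬝ᵥ x + t) • v + x := by
  ext k
  simp [resUnitReLU, vecMulVec_apply, Pi.single_apply, dotProduct, mul_comm]

section MoveUnit

variable {n : ℕ} (u u' : Fin n → ℝ) (j : Fin n) (α ρ : ℝ)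

def moveW1 : Fin n → Fin n → ℝ := vecMulVec (Pi.single j 1) (α • u)

def moveBias : Fin n → ℝ := Pi.single j (-(α * (1 - ρ ^ 2 / 8)))

def moveW2 : Fin n → Fin n → ℝ := vecMulVec ((8 / (α * ρ ^ 2)) • (u' - u)) (Pi.single j 1)

lemma resUnitReLU_move_apply (x : Fin n → ℝ) :
    resUnitReLU (moveW1 u j α) (moveW2 u u' j α ρ) (moveBias j α ρ) x
      = relu (α * (u ⬝ᵥ x - (1 - ρ ^ 2 / 8))) • (8 / (α * ρ ^ 2)) • (u' - u) + x := by
  rw [moveW1, moveW2, moveBias, resUnitReLU_vecMulVec_single, smul_dotProduct, smul_eq_mul,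
    ← mul_neg, ← mul_add, ← sub_eq_add_neg]

variable {u u' α ρ}

lemma resUnitReLU_move_self (hu : euclNorm u = 1) (hρ : ρ ≠ 0) (hα : 0 < α ∨ u' = u) :
    resUnitReLU (moveW1 u j α) (moveW2 u u' j α ρ) (moveBias j α ρ) u = u' := by
  rcases hα with hα | rfl
  · have hself : u ⬝ᵥ u = 1 := by rw [← euclNorm_sq, hu, one_pow]
    rw [resUnitReLU_move_apply, hself, show (1 : ℝ) - (1 - ρ ^ 2 / 8) = ρ ^ 2 / 8 by ring, relu,
      max_eq_left (by positivity), smul_smul,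
      show α * (ρ ^ 2 / 8) * (8 / (α * ρ ^ 2)) = 1 by field_simp, one_smul, sub_add_cancel]
  · simp [resUnitReLU_move_apply]

lemma resUnitReLU_move_of_le_euclNorm_sub {x : Fin n → ℝ} (hu : euclNorm u = 1)
    (hx : euclNorm x = 1) (hα : 0 ≤ α) (hρ : 0 ≤ ρ) (hsep : ρ / 2 ≤ euclNorm (u - x)) :
    resUnitReLU (moveW1 u j α) (moveW2 u u' j α ρ) (moveBias j α ρ) x = x := by
  have hle := dotProduct_le_of_le_euclNorm_sub hu hx (by positivity) hsep
  rw [resUnitReLU_move_apply, relu, max_eq_right (mul_nonpos_of_nonneg_of_nonpos hα (by linarith)),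
    zero_smul, zero_add]

lemma frob_moveW1 (hu : euclNorm u = 1) (hα : 0 ≤ α) : frob (moveW1 u j α) = α := by
  rw [moveW1, frob_vecMulVec, euclNorm_single, euclNorm_smul, hu, abs_of_nonneg hα, one_mul,
    mul_one]

lemma frob_moveW2 (hα : 0 ≤ α) :
    frob (moveW2 u u' j α ρ) = 8 * euclNorm (u' - u) / (α * ρ ^ 2) := by
  rw [moveW2, frob_vecMulVec, euclNorm_single, euclNorm_smul, abs_of_nonneg (by positivity),
    mul_one, div_mul_eq_mul_div]

end MoveUnit

theorem residual_unit_moves_one_column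
    {dx m : ℕ} (a : Fin m → Fin dx → ℝ) (i : Fin m) (a' : Fin dx → ℝ)
    (ha : ∀ p, euclNorm (a p) = 1)
    (ρ d : ℝ) (hρ : 0 < ρ)
    (hd : euclNorm (a i - a') = d)
    (hA : ∀ p q : Fin m, p ≠ q → ρ / 2 ≤ euclNorm (a p - a q)) :
    ∃ (W1 W2 : Fin dx → Fin dx → ℝ) (b : Fin dx → ℝ),
      (∀ p, resUnitReLU W1 W2 b (a p) = Function.update a i a' p) ∧
      frob W1 = Real.sqrt (8 * d) / ρ ∧ frob W2 = Real.sqrt (8 * d) / ρ := by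
  obtain ⟨j⟩ := nonempty_of_euclNorm_ne_zero ((ha i).trans_ne one_ne_zero)
  set α := Real.sqrt (8 * d) / ρ with hα
  have hα0 : 0 ≤ α := by positivity
  have hmove : 0 < α ∨ a' = a i := by
    rcases (hd ▸ euclNorm_nonneg _ : 0 ≤ d).eq_or_lt with hd0 | hd0
    · exact .inr (sub_eq_zero.1 (euclNorm_eq_zero.1 (hd.trans hd0.symm))).symm
    · exact .inl (by positivity)
  refine ⟨moveW1 (a i) j α, moveW2 (a i) a' j α ρ, moveBias j α ρ, fun p => ?_,
    frob_moveW1 j (ha i) hα0, ?_⟩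
  · rcases eq_or_ne p i with rfl | hp
    · rw [Function.update_self, resUnitReLU_move_self j (ha p) hρ.ne' hmove]
    · rw [Function.update_of_ne hp,
        resUnitReLU_move_of_le_euclNorm_sub j (ha i) (ha p) hα0 hρ.le (hA i p hp.symm)]
  · calc frob (moveW2 (a i) a' j α ρ) = 8 * d / Real.sqrt (8 * d) / ρ := by
          rw [frob_moveW2 j hα0, euclNorm_sub_comm, hd, hα]; field_simp
      _ = α := by rw [Real.div_sqrt]

end
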